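/- arXiv:2502.00282 — 3 statements merged into one kernel-verified Lean document; each statement's English description precedes it below -/
import Mathlib

section
/- Let d be a natural number and let z, h̃ : ℕ → (Fin d → ℝ) with (z j) k ≠ 1 for all j ≥ 1 and all coordinates k. Define h : ℕ → (Fin d → ℝ) by h 0 = 0 and h t = (1 - z t) ⊙ h (t-1) + z t ⊙ h̃ t for t ≥ 1, and define c : ℕ → (Fin d → ℝ) by c i = ∏_{j=1}^{i} (1 - z j) (elementwise product, with c 0 the all-ones vector). Then for every t, h t = ( ∑_{i=1}^{t} z i ⊙ h̃ i ⊙ (c i)^{-1} ) ⊙ c t, where (c i)^{-1} denotes the elementwise (coordinatewise) reciprocal of c i. -/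
/-- Cumulative-product reformulation of the minGRU recurrence (Eq. (3)):
with `c i = ∏_{j=1}^{i} (1 - z j)` (elementwise), if no entry of any `z j` equals 1
(for `j ≥ 1`), then `h t = (∑_{i=1}^{t} z i ⊙ h̃ i ⊙ (c i)⁻¹) ⊙ c t`,
where `(c i)⁻¹` is the coordinatewise reciprocal. -/
theorem minGRU_cumprod (d : ℕ) (z htil h : ℕ → (Fin d → ℝ))
    (hz : ∀ j : ℕ, 1 ≤ j → ∀ k : Fin d, z j k ≠ 1)
    (h0 : h 0 = 0)
    (hrec : ∀ t : ℕ, 1 ≤ t → h t = (1 - z t) * h (t - 1) + z t * htil t)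
    (c : ℕ → (Fin d → ℝ))
    (hc : ∀ i : ℕ, c i = ∏ j ∈ Finset.Icc 1 i, (1 - z j)) :
    ∀ t : ℕ,
      h t = (∑ i ∈ Finset.Icc 1 t, z i * htil i * (c i)⁻¹) * c t := by
  have hcne : ∀ i : ℕ, ∀ k : Fin d, c i k ≠ 0 := by
    intro i k
    rw [hc i]
    have : (∏ j ∈ Finset.Icc 1 i, (1 - z j)) k = ∏ j ∈ Finset.Icc 1 i, (1 - z j k) := by
      simp [Finset.prod_apply]
    rw [this]
    apply Finset.prod_ne_zero_iff.2
    intro j hj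
    have := hz j (Finset.mem_Icc.1 hj).1 k
    intro hcontra
    apply this
    linarith
  intro t
  induction t with
  | zero => simp [h0]
  | succ t ih =>
    have hstep : h (t + 1) = (1 - z (t + 1)) * h t + z (t + 1) * htil (t + 1) := by
      simpa using hrec (t + 1) (Nat.le_add_left 1 t)
    have hcsucc : c (t + 1) = c t * (1 - z (t + 1)) := by
      rw [hc, hc, Finset.prod_Icc_succ_top (Nat.le_add_left 1 t)]
    rw [hstep, ih, Finset.sum_Icc_succ_top (Nat.le_add_left 1 t)]
    funext k
    have hne : c (t + 1) k ≠ 0 := hcne (t + 1) k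
    simp only [Pi.add_apply, Pi.mul_apply, Pi.sub_apply, Pi.one_apply, Pi.inv_apply,
      Finset.sum_apply, hcsucc]
    have h1 : (1:ℝ) - z (t + 1) k ≠ 0 :=
      sub_ne_zero.2 fun hh => hz (t + 1) (by omega) k hh.symm
    have hct : c t k ≠ 0 := hcne t k
    rw [add_mul, inv_mul_cancel_right₀ (mul_ne_zero hct h1)]
    ring
end

section
/- Let V be a finite set of nodes and l, d, m natural numbers. Fix: node features x : V → (Fin l → ℝ); positional encodings p : V → (Fin d → ℝ); a fixed vector λ : Fin d → ℝ; functions φ : Fin m → ((Fin d → ℝ) → (Fin d → ℝ)); matrices W : Matrix (Fin d) (Fin l) ℝ, B : Matrix (Fin l) (Fin d) ℝ, W_z, W_h : Matrix (Fin l) (Fin l) ℝ. For a node u define the d × m matrices A_u with i-th column φ i λ ⊙ (W · x u) and C_u with i-th column φ i λ ⊙ p u (⊙ is elementwise product of vectors in Fin d → ℝ); define a_u = B (A_u ⊙ C_u) (elementwise product of matrices followed by matrix multiplication), z_u = σ ∘ (W_z · x u) with σ(t) = 1/(1 + exp(-t)) applied entrywise, h̃_u = W_h · x u, and h_u = ( ∑_{v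 ∈ V} ⟪a_u, a_v⟫ ) • (z_u ⊙ h̃_u), where ⟪M, N⟫ = ∑_{i,j} M i j · N i j is the vectorized (Frobenius) inner product. Then for every permutation σ of V, if h' is computed by the same formulas from the permuted inputs x' = x ∘ σ⁻¹ and p' = p ∘ σ⁻¹ (with λ, φ, W, B, W_z, W_h unchanged), then h'_{σ(u)} = h_u for every node u. -/
noncomputable section

/-- The logistic sigmoid `σ(t) = 1/(1 + exp(-t))`. -/
def sigmoid (t : ℝ) : ℝ := 1 / (1 + Real.exp (-t))

/-- Feature component `A_u`: the `d × m` matrix whose `j`-th column is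
`φ j λ ⊙ (W · x_u)` (elementwise product of vectors). -/
def featComp {l d m : ℕ} (lam : Fin d → ℝ)
    (φ : Fin m → (Fin d → ℝ) → (Fin d → ℝ))
    (W : Matrix (Fin d) (Fin l) ℝ) (xu : Fin l → ℝ) :
    Matrix (Fin d) (Fin m) ℝ :=
  Matrix.of fun i j => φ j lam i * W.mulVec xu i

/-- Positional component `C_u`: the `d × m` matrix whose `j`-th column is
`φ j λ ⊙ p_u`. -/
def posComp {d m : ℕ} (lam : Fin d → ℝ)
    (φ : Fin m → (Fin d → ℝ) → (Fin d → ℝ)) (pu : Fin d → ℝ) :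
    Matrix (Fin d) (Fin m) ℝ :=
  Matrix.of fun i j => φ j lam i * pu i

/-- Node embedding `a_u = B (A_u ⊙ C_u)`: elementwise (Hadamard) product of the
feature and positional components, followed by multiplication by `B`. -/
def nodeEmb {l d m : ℕ} (lam : Fin d → ℝ)
    (φ : Fin m → (Fin d → ℝ) → (Fin d → ℝ))
    (W : Matrix (Fin d) (Fin l) ℝ) (B : Matrix (Fin l) (Fin d) ℝ)
    (xu : Fin l → ℝ) (pu : Fin d → ℝ) : Matrix (Fin l) (Fin m) ℝ :=
  B * (Matrix.of fun i j =>
    featComp lam φ W xu i j * posComp lam φ pu i j)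

/-- Vectorized (Frobenius) inner product `⟪M, N⟫ = ∑_{i,j} M i j · N i j`. -/
def frobInner {l m : ℕ} (M N : Matrix (Fin l) (Fin m) ℝ) : ℝ :=
  ∑ i, ∑ j, M i j * N i j

/-- GraphMinNet output
`h_u = (∑_{v ∈ V} ⟪a_u, a_v⟫) • (z_u ⊙ h̃_u)` with
`z_u = σ ∘ (W_z · x_u)` (entrywise logistic sigmoid) and `h̃_u = W_h · x_u`. -/
def hOut {V : Type*} [Fintype V] {l d m : ℕ} (lam : Fin d → ℝ)
    (φ : Fin m → (Fin d → ℝ) → (Fin d → ℝ))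
    (W : Matrix (Fin d) (Fin l) ℝ) (B : Matrix (Fin l) (Fin d) ℝ)
    (Wz Wh : Matrix (Fin l) (Fin l) ℝ)
    (x : V → Fin l → ℝ) (p : V → Fin d → ℝ) (u : V) : Fin l → ℝ :=
  (∑ v : V, frobInner (nodeEmb lam φ W B (x u) (p u))
      (nodeEmb lam φ W B (x v) (p v))) •
    fun k => sigmoid (Wz.mulVec (x u) k) * Wh.mulVec (x u) k

theorem hOut_comp_equiv {V V' : Type*} [Fintype V] [Fintype V'] {l d m : ℕ}
    (lam : Fin d → ℝ) (φ : Fin m → (Fin d → ℝ) → (Fin d → ℝ))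
    (W : Matrix (Fin d) (Fin l) ℝ) (B : Matrix (Fin l) (Fin d) ℝ)
    (Wz Wh : Matrix (Fin l) (Fin l) ℝ)
    (x : V → Fin l → ℝ) (p : V → Fin d → ℝ) (e : V' ≃ V) (u : V') :
    hOut lam φ W B Wz Wh (x ∘ e) (p ∘ e) u = hOut lam φ W B Wz Wh x p (e u) := by
  simp only [hOut, Function.comp_apply]
  rw [e.sum_comp fun v => frobInner _ (nodeEmb lam φ W B (x v) (p v))]

/-- Permutation equivariance of GraphMinNet (Proposition 1, Type-3 inner
product): computing the output from the permuted inputs `x ∘ σ⁻¹`, `p ∘ σ⁻¹`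
at node `σ u` gives the same result as computing it from the original inputs
at node `u`. -/
theorem graphMinNet_permutation_equivariant {V : Type*} [Fintype V]
    {l d m : ℕ} (lam : Fin d → ℝ)
    (φ : Fin m → (Fin d → ℝ) → (Fin d → ℝ))
    (W : Matrix (Fin d) (Fin l) ℝ) (B : Matrix (Fin l) (Fin d) ℝ)
    (Wz Wh : Matrix (Fin l) (Fin l) ℝ)
    (x : V → Fin l → ℝ) (p : V → Fin d → ℝ)
    (σ : Equiv.Perm V) (u : V) :
    hOut lam φ W B Wz Wh (x ∘ ⇑σ⁻¹) (p ∘ ⇑σ⁻¹) (σ u)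
      = hOut lam φ W B Wz Wh x p u := by
  rw [hOut_comp_equiv, Equiv.Perm.coe_inv, Equiv.symm_apply_apply]
end
end

section
/- Let G be a connected finite simple graph with at least two vertices and vertex set V, A its real adjacency matrix, D the diagonal degree matrix, and Ã = D^{-1/2} A D^{-1/2}. Fix a natural number N ≥ 1, coefficients b_1, …, b_N > 0, and set M = ∑_{k=1}^{N} b_k Ã^k. Fix constants K > 0, c₂ > 0, c₁ ∈ ℝ, and let σ(t) = 1/(1+exp(-t)) be the logistic sigmoid. For x : V → ℝ define h_u(x) = c₂ K (x_u)² σ(c₁ x_u) ∑_{w ∈ V} x_w M_{u,w}. Then for all distinct vertices u, v and every x : V → ℝ: (i) the derivative at 0 of t ↦ h_u(x + t·e_v), where e_v is the indicator function of v, equals c₂ K (x_u)² σ(c₁ x_u) M_{u,v}; and (ii) if x_u ≠ 0 and dist_G(u,v) ≤ N, this derivative satisfies ∂h_u/∂x_v ≥ c₂ K (x_u)² σ(c₁ x_u) b_k (Ã^k)_{u,v} > 0, where k = dist_G(u,v). -/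
private lemma pow_dominate {V : Type*} [Fintype V] [DecidableEq V]
    (P Q : Matrix V V ℝ) (c : ℝ) (hc : 0 ≤ c)
    (hQ : ∀ i j, 0 ≤ Q i j) (hPQ : ∀ i j, c * Q i j ≤ P i j) :
    ∀ k i j, 0 ≤ (Q ^ k) i j ∧ c ^ k * (Q ^ k) i j ≤ (P ^ k) i j := by
  intro k
  induction k with
  | zero =>
    intro i j
    simp only [pow_zero, one_mul]
    constructor
    · by_cases hij : i = j <;> simp [Matrix.one_apply, hij]
    · exact le_refl _
  | succ n ih =>
    intro i j
    have hQpow : ∀ l, 0 ≤ (Q ^ n) i l := fun l => (ih i l).1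
    constructor
    · rw [pow_succ, Matrix.mul_apply]
      exact Finset.sum_nonneg fun l _ => mul_nonneg (hQpow l) (hQ l j)
    · simp only [pow_succ, Matrix.mul_apply]
      rw [Finset.mul_sum]
      apply Finset.sum_le_sum
      intro l _
      have h1 := (ih i l).2
      have h2 := hPQ l j
      calc c ^ n * c * ((Q ^ n) i l * Q l j)
          = (c ^ n * (Q ^ n) i l) * (c * Q l j) := by ring
        _ ≤ (P ^ n) i l * P l j := by
            apply mul_le_mul h1 h2 (mul_nonneg hc (hQ l j))
            exact le_trans (mul_nonneg (pow_nonneg hc n) ((ih i l).1)) h1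

/-- Scalar-feature instantiation of the long-range dependency property
(Proposition 2): with `M = ∑_{k=1}^N b_k Ã^k` (`b_k > 0`),
`h_u(x) = c₂ K (x_u)² σ(c₁ x_u) ∑_w x_w M_{u,w}` and `σ` the logistic sigmoid,
(i) the derivative at `0` of `t ↦ h_u(x + t·e_v)` equals
`c₂ K (x_u)² σ(c₁ x_u) M_{u,v}`, and (ii) if `x_u ≠ 0` and `dist_G(u,v) ≤ N`,
this derivative is bounded below by the positive quantity
`c₂ K (x_u)² σ(c₁ x_u) b_k (Ã^k)_{u,v}` with `k = dist_G(u,v)`. -/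
theorem graphMinNet_long_range_dependency {V : Type*} [Fintype V] [DecidableEq V]
    (G : SimpleGraph V) [DecidableRel G.Adj]
    (hconn : G.Connected) (hcard : 1 < Fintype.card V)
    (A : Matrix V V ℝ) (hA : A = G.adjMatrix ℝ)
    (Dinvsqrt : Matrix V V ℝ)
    (hD : Dinvsqrt = Matrix.diagonal fun v => (Real.sqrt (G.degree v))⁻¹)
    (Atil : Matrix V V ℝ) (hAtil : Atil = Dinvsqrt * A * Dinvsqrt)
    (N : ℕ) (hN : 1 ≤ N) (b : ℕ → ℝ)
    (hb : ∀ k, 1 ≤ k → k ≤ N → 0 < b k)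
    (M : Matrix V V ℝ) (hM : M = ∑ k ∈ Finset.Icc 1 N, b k • Atil ^ k)
    (K c₂ : ℝ) (hK : 0 < K) (hc₂ : 0 < c₂) (c₁ : ℝ)
    (h : (V → ℝ) → V → ℝ)
    (hh : ∀ (x : V → ℝ) (u : V),
      h x u = c₂ * K * (x u) ^ 2 * (1 / (1 + Real.exp (-(c₁ * x u)))) *
        ∑ w : V, x w * M u w)
    (u v : V) (huv : u ≠ v) (x : V → ℝ) :
    deriv (fun t : ℝ => h (x + t • (Pi.single v 1 : V → ℝ)) u) 0
        = c₂ * K * (x u) ^ 2 * (1 / (1 + Real.exp (-(c₁ * x u)))) * M u v ∧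
      (x u ≠ 0 → G.dist u v ≤ N →
        c₂ * K * (x u) ^ 2 * (1 / (1 + Real.exp (-(c₁ * x u)))) *
            (b (G.dist u v) * (Atil ^ (G.dist u v)) u v) ≤
          deriv (fun t : ℝ => h (x + t • (Pi.single v 1 : V → ℝ)) u) 0 ∧
        0 < c₂ * K * (x u) ^ 2 * (1 / (1 + Real.exp (-(c₁ * x u)))) *
            (b (G.dist u v) * (Atil ^ (G.dist u v)) u v)) := by
  set C : ℝ := c₂ * K * (x u) ^ 2 * (1 / (1 + Real.exp (-(c₁ * x u)))) with hC
  set S : ℝ := ∑ w : V, x w * M u w with hS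
  -- Part (i): compute the derivative
  have hsingle_u : (Pi.single v 1 : V → ℝ) u = 0 := Pi.single_eq_of_ne huv 1
  have hfun : (fun t : ℝ => h (x + t • (Pi.single v 1 : V → ℝ)) u)
      = fun t : ℝ => C * S + C * M u v * t := by
    funext t
    rw [hh]
    have hxu : (x + t • (Pi.single v 1 : V → ℝ)) u = x u := by
      simp [hsingle_u]
    rw [hxu]
    have hsum : (∑ w : V, (x + t • (Pi.single v 1 : V → ℝ)) w * M u w)
        = S + t * M u v := by
      have : ∀ w : V, (x + t • (Pi.single v 1 : V → ℝ)) w * M u w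
          = x w * M u w + t * ((Pi.single v 1 : V → ℝ) w * M u w) := by
        intro w; simp [Pi.add_apply]; ring
      rw [Finset.sum_congr rfl fun w _ => this w, Finset.sum_add_distrib,
        ← Finset.mul_sum]
      congr 1
      have : ∀ w : V, (Pi.single v 1 : V → ℝ) w * M u w
          = (if w = v then M u w else 0) := by
        intro w
        by_cases hw : w = v <;> simp [Pi.single_apply, hw]
      rw [Finset.sum_congr rfl fun w _ => this w, Finset.sum_ite_eq' Finset.univ v]
      simp
    rw [hsum]; ring
  have hderiv : deriv (fun t : ℝ => h (x + t • (Pi.single v 1 : V → ℝ)) u) 0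
      = C * M u v := by
    rw [hfun]
    have : HasDerivAt (fun t : ℝ => C * S + C * M u v * t) (C * M u v) 0 := by
      simpa using ((hasDerivAt_id (0 : ℝ)).const_mul (C * M u v)).const_add (C * S)
    exact this.deriv
  refine ⟨hderiv, fun hxu hdist => ?_⟩
  -- Part (ii)
  set k : ℕ := G.dist u v with hk
  have hk1 : 1 ≤ k := hconn.pos_dist_of_ne huv
  -- degrees are positive
  have hdeg : ∀ w : V, 0 < G.degree w := by
    intro w
    rw [G.degree_pos_iff_exists_adj w]
    obtain ⟨w', hw'⟩ := Fintype.exists_ne_of_one_lt_card hcard w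
    have hd : G.dist w w' ≠ 0 := (hconn.dist_eq_zero_iff).not.mpr (Ne.symm hw')
    obtain ⟨p, hp⟩ := SimpleGraph.exists_walk_of_dist_ne_zero hd
    cases p with
    | nil => exact absurd hp.symm (by simpa using hd)
    | cons hadj _ => exact ⟨_, hadj⟩
  set d : V → ℝ := fun w => (Real.sqrt (G.degree w))⁻¹ with hd
  have hdpos : ∀ w, 0 < d w := by
    intro w
    exact inv_pos.mpr (Real.sqrt_pos.mpr (by exact_mod_cast hdeg w))
  -- minimum of d
  obtain ⟨w₀, -, hw₀⟩ := Finset.exists_min_image Finset.univ d ⟨u, Finset.mem_univ u⟩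
  set ε : ℝ := d w₀ with hε
  have hεpos : 0 < ε := hdpos w₀
  have hεle : ∀ w, ε ≤ d w := fun w => hw₀ w (Finset.mem_univ w)
  -- A is entrywise nonneg and Atil u w = d u * A u w * d w
  have hAnn : ∀ i j, (0:ℝ) ≤ A i j := by
    intro i j; rw [hA]; by_cases hij : G.Adj i j <;> simp [hij]
  have hAtil_entry : ∀ i j, Atil i j = d i * A i j * d j := by
    intro i j
    rw [hAtil, hD, Matrix.mul_apply]
    simp [Matrix.diagonal_mul, Matrix.mul_apply, Finset.mul_sum, Matrix.diagonal_apply,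
      Finset.sum_ite_eq, Finset.sum_ite_eq']
  have hdom : ∀ i j, ε ^ 2 * A i j ≤ Atil i j := by
    intro i j
    rw [hAtil_entry]
    have h1 : ε * A i j ≤ d i * A i j :=
      mul_le_mul_of_nonneg_right (hεle i) (hAnn i j)
    calc ε ^ 2 * A i j = (ε * A i j) * ε := by ring
      _ ≤ (d i * A i j) * d j := by
          apply mul_le_mul h1 (hεle j) hεpos.le
          exact mul_nonneg (hdpos i).le (hAnn i j)
  have hpow := pow_dominate Atil A (ε ^ 2) (sq_nonneg ε) hAnn hdom
  -- Atil powers are entrywise nonneg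
  have hAtilnn : ∀ i j, (0:ℝ) ≤ Atil i j := by
    intro i j
    exact le_trans (mul_nonneg (sq_nonneg ε) (hAnn i j)) (hdom i j)
  have hAtilpow := pow_dominate Atil Atil 0 le_rfl hAtilnn (fun i j => by
    simpa using hAtilnn i j)
  have hAtilpownn : ∀ (n : ℕ) i j, (0:ℝ) ≤ (Atil ^ n) i j := fun n i j => (hAtilpow n i j).1
  -- (A^k) u v > 0
  have hAk : 0 < (A ^ k) u v := by
    rw [hA, SimpleGraph.adjMatrix_pow_apply_eq_card_walk]
    have hdne : G.dist u v ≠ 0 := Nat.one_le_iff_ne_zero.mp hk1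
    obtain ⟨p, hp⟩ := SimpleGraph.exists_walk_of_dist_ne_zero hdne
    have : 0 < Fintype.card {p : G.Walk u v // p.length = k} :=
      Fintype.card_pos_iff.mpr ⟨⟨p, hp⟩⟩
    exact_mod_cast this
  have hAtilk : 0 < (Atil ^ k) u v :=
    lt_of_lt_of_le (mul_pos (pow_pos (pow_pos hεpos 2) k) hAk) ((hpow k u v).2)
  -- M u v ≥ b k * (Atil^k) u v
  have hkmem : k ∈ Finset.Icc 1 N := Finset.mem_Icc.mpr ⟨hk1, hdist⟩
  have hMuv : b k * (Atil ^ k) u v ≤ M u v := by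
    rw [hM]
    have : (∑ j ∈ Finset.Icc 1 N, b j • Atil ^ j) u v
        = ∑ j ∈ Finset.Icc 1 N, b j * (Atil ^ j) u v := by
      simp [Matrix.sum_apply]
    rw [this]
    apply Finset.single_le_sum (f := fun j => b j * (Atil ^ j) u v) _ hkmem
    intro j hj
    obtain ⟨hj1, hj2⟩ := Finset.mem_Icc.mp hj
    exact mul_nonneg (hb j hj1 hj2).le (hAtilpownn j u v)
  -- C > 0
  have hCpos : 0 < C := by
    have hsq : 0 < (x u) ^ 2 := by rw [sq]; exact mul_self_pos.mpr hxu
    have hsig : 0 < 1 / (1 + Real.exp (-(c₁ * x u))) := by positivity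
    rw [hC]
    exact mul_pos (mul_pos (mul_pos hc₂ hK) hsq) hsig
  constructor
  · rw [hderiv]
    exact mul_le_mul_of_nonneg_left hMuv hCpos.le
  · exact mul_pos hCpos (mul_pos (hb k hk1 hdist) hAtilk)
end
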